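/- The Shapley value satisfies efficiency: for any finite set of players L with a game function G : P(L) → ℝ satisfying G(∅) = 0, the sum over all players a ∈ L of Shapley(L, G, a) equals G(L). -/
import Mathlib


open Finset

variable {α : Type*} [DecidableEq α]

/-- Set of players preceding `a` in the permutation represented by list `l`. -/
def preceding (l : List α) (a : α) : Finset α := (l.takeWhile (fun x => x ≠ a)).toFinset

/-- Permutation-based Shapley value: average marginal contribution over all orderings of `L`. -/
noncomputable def shapley (L : Finset α) (G : Finset α → ℝ) (a : α) : ℝ :=
  (1 / (Nat.factorial L.card : ℝ)) *
    ((L.toList.permutations).map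
      (fun l => G (insert a (preceding l a)) - G (preceding l a))).sum

lemma preceding_cons_self (x : α) (xs : List α) : preceding (x :: xs) x = ∅ := by
  simp [preceding, List.takeWhile]

lemma preceding_cons_ne (x : α) (xs : List α) (a : α) (h : x ≠ a) :
    preceding (x :: xs) a = insert x (preceding xs a) := by
  simp [preceding, List.takeWhile, h]

lemma telescope (l : List α) (hl : l.Nodup) (G : Finset α → ℝ) :
    ∑ a ∈ l.toFinset, (G (insert a (preceding l a)) - G (preceding l a))
      = G l.toFinset - G ∅ := by
  induction l generalizing G with
  | nil => simp
  | cons x xs ih =>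
    obtain ⟨hx, hxs⟩ := List.nodup_cons.mp hl
    have hx' : x ∉ xs.toFinset := by simpa using hx
    rw [List.toFinset_cons, Finset.sum_insert hx']
    have hrest : ∑ a ∈ xs.toFinset, (G (insert a (preceding (x :: xs) a))
        - G (preceding (x :: xs) a))
        = ∑ a ∈ xs.toFinset, ((fun s => G (insert x s)) (insert a (preceding xs a))
            - (fun s => G (insert x s)) (preceding xs a)) := by
      apply Finset.sum_congr rfl
      intro a ha
      have hne : x ≠ a := by rintro rfl; exact hx' ha
      rw [preceding_cons_ne x xs a hne]
      simp [Finset.insert_comm]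
    rw [hrest, ih hxs (fun s => G (insert x s))]
    rw [preceding_cons_self]
    simp

lemma sum_swap_list (L : Finset α) (P : List (List α)) (g : α → List α → ℝ) :
    ∑ a ∈ L, (P.map (g a)).sum = (P.map (fun l => ∑ a ∈ L, g a l)).sum := by
  induction P with
  | nil => simp
  | cons p ps ih => simp [Finset.sum_add_distrib, ih]

/-- Efficiency: the Shapley values of all players sum to the value of the grand coalition. -/
theorem shapley_efficiency (L : Finset α) (G : Finset α → ℝ) (hG : G ∅ = 0) :
    ∑ a ∈ L, shapley L G a = G L := by
  unfold shapley
  rw [← Finset.mul_sum, sum_swap_list]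
  have hconst : (L.toList.permutations.map
      (fun l => ∑ a ∈ L, (G (insert a (preceding l a)) - G (preceding l a)))).sum
      = (L.toList.permutations.length : ℝ) * G L := by
    rw [List.sum_eq_card_nsmul _ (G L)]
    · simp [mul_comm]
    · intro x hx
      obtain ⟨l, hl, rfl⟩ := List.mem_map.mp hx
      have hperm : List.Perm l L.toList := List.mem_permutations.mp hl
      have hnodup : l.Nodup := hperm.nodup_iff.mpr L.nodup_toList
      have hfin : l.toFinset = L := by
        rw [List.toFinset_eq_of_perm _ _ hperm, Finset.toList_toFinset]
      rw [← hfin, telescope l hnodup G, hG, sub_zero, hfin]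
  rw [hconst, List.length_permutations, Finset.length_toList]
  rw [← mul_assoc, one_div_mul_cancel, one_mul]
  exact Nat.cast_ne_zero.mpr (Nat.factorial_ne_zero _)
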